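/- Let ρ be a Lévy measure on (0,∞), α ∈ (1,2), and suppose C := sup_{s > 0, s ≤ 1} s^α ρ(s,∞) < ∞. Then for every ε ∈ (0,1] and r > 0 small enough, ∫₀^ε s² d(rρ(r^{1/α}·))(ds) ≤ 2C ∫₀^ε s^{1-α} ds = (2C/(2-α)) ε^{2-α}; in particular lim_{ε↓0} limsup_{r↓0} ∫_{0<s≤ε} s² r ρ(r^{1/α} ds) = 0. -/

import Mathlib

/-!
Since the Lévy integral is finite, `ρ(s,∞) < ∞`, so the hypothesis says `ρ(s,∞) ≤ C s^{-α}` on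
`(0,1]`. This tail bound is invariant under `ρ ↦ rρ(r^{1/α}·)`: the rescaled measure satisfies it
on `(0, r^{-1/α}] ⊇ (0,1]` when `r ≤ 1`. By the layer-cake formula
`∫_{(0,ε]} s² dμ = 2 ∫₀^ε t μ((t,ε]) dt`, any measure with this tail bound on `(0,ε]` has
`∫_{(0,ε]} s² dμ ≤ 2C ∫₀^ε t^{1-α} dt = 2C ε^{2-α} / (2-α)`, which tends to `0` with `ε`.
-/

open MeasureTheory Filter Set ENNReal Topology

theorem lintegral_Ioc_ofReal_mul_rpow {p : ℝ} (hp : -1 < p) {C : ℝ} (hC : 0 ≤ C) {b : ℝ}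
    (hb : 0 ≤ b) :
    ∫⁻ t in Ioc 0 b, ENNReal.ofReal (C * t ^ p) = ENNReal.ofReal (C * b ^ (p + 1) / (p + 1)) := by
  have hint : IntegrableOn (fun t : ℝ => C * t ^ p) (Ioc 0 b) := by
    rw [← intervalIntegrable_iff_integrableOn_Ioc_of_le hb]
    exact (intervalIntegral.intervalIntegrable_rpow' hp).const_mul C
  rw [← ofReal_integral_eq_lintegral_ofReal hint, ← intervalIntegral.integral_of_le hb,
    intervalIntegral.integral_const_mul, integral_rpow (Or.inl hp),
    Real.zero_rpow (by linarith), sub_zero, mul_div_assoc]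
  filter_upwards [ae_restrict_mem measurableSet_Ioc] with t ht
  exact mul_nonneg hC (Real.rpow_nonneg ht.1.le p)

theorem setLIntegral_Ioc_sq_le_of_measure_Ioi_le (μ : Measure ℝ) {α C a : ℝ} (hα : α < 2)
    (hC : 0 ≤ C) (ha : 0 < a) (htail : ∀ t ∈ Ioc 0 a, μ (Ioi t) ≤ ENNReal.ofReal (C * t ^ (-α))) :
    ∫⁻ s in Ioc 0 a, ENNReal.ofReal (s ^ 2) ∂μ ≤ ENNReal.ofReal (2 * C / (2 - α) * a ^ (2 - α)) := by
  have hlayer : ∫⁻ s in Ioc 0 a, ENNReal.ofReal (s ^ 2) ∂μ = ENNReal.ofReal 2 *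
      ∫⁻ t in Ioi 0, μ.restrict (Ioc 0 a) {s | t < s} * ENNReal.ofReal (t ^ ((2 : ℝ) - 1)) := by
    have hnn : 0 ≤ᵐ[μ.restrict (Ioc 0 a)] id := by
      filter_upwards [ae_restrict_mem measurableSet_Ioc] with s hs using hs.1.le
    simpa only [id, Real.rpow_two] using
      lintegral_rpow_eq_lintegral_meas_lt_mul _ hnn measurable_id.aemeasurable two_pos
  have hpointwise : ∀ t ∈ Ioi (0 : ℝ),
      μ.restrict (Ioc 0 a) {s | t < s} * ENNReal.ofReal (t ^ ((2 : ℝ) - 1)) ≤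
        (Ioc 0 a).indicator (fun t => ENNReal.ofReal (C * t ^ (1 - α))) t := by
    intro t ht
    rw [Measure.restrict_apply' measurableSet_Ioc]
    by_cases hta : t ≤ a
    · rw [indicator_of_mem (show t ∈ Ioc 0 a from ⟨ht, hta⟩)]
      calc μ ({s | t < s} ∩ Ioc 0 a) * ENNReal.ofReal (t ^ ((2 : ℝ) - 1))
          ≤ ENNReal.ofReal (C * t ^ (-α)) * ENNReal.ofReal (t ^ ((2 : ℝ) - 1)) :=
            mul_le_mul_left (measure_mono inter_subset_left |>.trans (htail t ⟨ht, hta⟩)) _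
        _ = ENNReal.ofReal (C * t ^ (1 - α)) := by
            rw [← ENNReal.ofReal_mul (mul_nonneg hC (Real.rpow_nonneg ht.le _)), mul_assoc,
              ← Real.rpow_add ht]
            ring_nf
    · have hempty : {s | t < s} ∩ Ioc 0 a = ∅ :=
        eq_empty_of_forall_notMem fun s hs => hta (hs.1.le.trans hs.2.2)
      simp [hempty]
  calc ∫⁻ s in Ioc 0 a, ENNReal.ofReal (s ^ 2) ∂μ
      ≤ ENNReal.ofReal 2 *
          ∫⁻ t in Ioi 0, (Ioc 0 a).indicator (fun t => ENNReal.ofReal (C * t ^ (1 - α))) t := by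
        rw [hlayer]
        gcongr ENNReal.ofReal 2 * ?_
        exact setLIntegral_mono' measurableSet_Ioi hpointwise
    _ = ENNReal.ofReal 2 * ENNReal.ofReal (C * a ^ (2 - α) / (2 - α)) := by
        rw [lintegral_indicator measurableSet_Ioc, Measure.restrict_restrict measurableSet_Ioc,
          inter_eq_left.2 Ioc_subset_Ioi_self,
          lintegral_Ioc_ofReal_mul_rpow (by linarith) hC ha.le]
        ring_nf
    _ = ENNReal.ofReal (2 * C / (2 - α) * a ^ (2 - α)) := by
        rw [← ENNReal.ofReal_mul zero_le_two]
        ring_nf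

theorem measure_Ioi_ne_top_of_lintegral_min_one_sq_lt_top {ρ : Measure ℝ}
    (hρ : ∫⁻ s, ENNReal.ofReal (min 1 (s ^ 2)) ∂ρ < ⊤) {s : ℝ} (hs : 0 < s) :
    ρ (Ioi s) ≠ ⊤ := by
  have hpos : ENNReal.ofReal (min 1 (s ^ 2)) ≠ 0 := by positivity
  refine ne_top_of_le_ne_top (div_lt_top hρ.ne hpos).ne
    ((measure_mono fun t (ht : s < t) => ?_).trans
      (meas_ge_le_lintegral_div (by fun_prop) hpos ofReal_ne_top))
  show ENNReal.ofReal (min 1 (s ^ 2)) ≤ ENNReal.ofReal (min 1 (t ^ 2))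
  gcongr

theorem measure_Ioi_le_ofReal_mul_rpow_neg {ρ : Measure ℝ} {α C s : ℝ} (hs : 0 < s)
    (hfin : ρ (Ioi s) ≠ ⊤) (h : s ^ α * (ρ (Ioi s)).toReal ≤ C) :
    ρ (Ioi s) ≤ ENNReal.ofReal (C * s ^ (-α)) := by
  rw [← ofReal_toReal hfin, Real.rpow_neg hs.le, ← div_eq_mul_inv]
  exact ENNReal.ofReal_le_ofReal ((le_div_iff₀' (Real.rpow_pos_of_pos hs α)).2 h)

/-- The measure `r ρ(r^{1/α} ds)`. -/
noncomputable def rescaledMeasure (ρ : Measure ℝ) (α r : ℝ) : Measure ℝ :=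
  Measure.map (fun s : ℝ => r ^ (-(1 / α)) * s) (ENNReal.ofReal r • ρ)

theorem rescaledMeasure_Ioi (ρ : Measure ℝ) (α : ℝ) {r : ℝ} (hr : 0 < r) (t : ℝ) :
    rescaledMeasure ρ α r (Ioi t) = ENNReal.ofReal r * ρ (Ioi (t * r ^ (1 / α))) := by
  rw [rescaledMeasure, Measure.map_apply (measurable_const_mul _) measurableSet_Ioi,
    preimage_const_mul_Ioi₀ _ (Real.rpow_pos_of_pos hr _), Real.rpow_neg hr.le, div_inv_eq_mul,
    Measure.smul_apply, smul_eq_mul]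

theorem rescaledMeasure_Ioi_le {ρ : Measure ℝ} {α C r t : ℝ} (hα : 0 < α) (hr : 0 < r)
    (htail : ∀ s ∈ Ioc 0 1, ρ (Ioi s) ≤ ENNReal.ofReal (C * s ^ (-α)))
    (ht : 0 < t) (htr : t * r ^ (1 / α) ≤ 1) :
    rescaledMeasure ρ α r (Ioi t) ≤ ENNReal.ofReal (C * t ^ (-α)) := by
  have hr' : 0 < r ^ (1 / α) := Real.rpow_pos_of_pos hr _
  calc rescaledMeasure ρ α r (Ioi t)
      ≤ ENNReal.ofReal r * ENNReal.ofReal (C * (t * r ^ (1 / α)) ^ (-α)) := by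
        rw [rescaledMeasure_Ioi ρ α hr]
        gcongr
        exact htail _ ⟨mul_pos ht hr', htr⟩
    _ = ENNReal.ofReal (C * t ^ (-α)) := by
        rw [← ENNReal.ofReal_mul hr.le, Real.mul_rpow ht.le hr'.le, ← Real.rpow_mul hr.le,
          one_div_mul_eq_div, neg_div, div_self hα.ne', Real.rpow_neg_one]
        congr 1
        field_simp

theorem setLIntegral_Ioc_sq_rescaledMeasure_le {ρ : Measure ℝ} {α C ε r : ℝ}
    (hα : α ∈ Ioo 0 2) (hC : 0 ≤ C)
    (htail : ∀ s ∈ Ioc 0 1, ρ (Ioi s) ≤ ENNReal.ofReal (C * s ^ (-α)))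
    (hε : ε ∈ Ioc 0 1) (hr : r ∈ Ioc 0 1) :
    ∫⁻ s in Ioc 0 ε, ENNReal.ofReal (s ^ 2) ∂rescaledMeasure ρ α r ≤
      ENNReal.ofReal (2 * C / (2 - α) * ε ^ (2 - α)) := by
  refine setLIntegral_Ioc_sq_le_of_measure_Ioi_le _ hα.2 hC hε.1 fun t ht =>
    rescaledMeasure_Ioi_le hα.1 hr.1 htail ht.1 ?_
  exact mul_le_one₀ (ht.2.trans hε.2) (Real.rpow_nonneg hr.1.le _)
    (Real.rpow_le_one hr.1.le hr.2 (one_div_pos.2 hα.1).le)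

theorem tendsto_ofReal_mul_rpow_nhdsGT_zero (K : ℝ) {p : ℝ} (hp : 0 < p) :
    Tendsto (fun ε : ℝ => ENNReal.ofReal (K * ε ^ p)) (𝓝[>] 0) (𝓝 0) := by
  have hcont : Tendsto (fun ε : ℝ => K * ε ^ p) (𝓝 0) (𝓝 (K * 0 ^ p)) :=
    ((Real.continuous_rpow_const hp.le).tendsto 0).const_mul K
  rw [Real.zero_rpow hp.ne', mul_zero] at hcont
  simpa using (ENNReal.tendsto_ofReal hcont).mono_left nhdsWithin_le_nhds

theorem rescaled_levy_second_moment_general (ρ : Measure ℝ) (α : ℝ) (hα : α ∈ Set.Ioo (1 : ℝ) 2)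
    (hρlevy : ∫⁻ s, ENNReal.ofReal (min 1 (s ^ 2)) ∂ρ < ⊤)
    (C : ℝ) (hC0 : 0 ≤ C)
    (hC : ∀ s ∈ Set.Ioc (0 : ℝ) 1, s ^ α * (ρ (Set.Ioi s)).toReal ≤ C) :
    (∀ ε ∈ Set.Ioc (0 : ℝ) 1, ∃ r₀ > (0 : ℝ), ∀ r ∈ Set.Ioo (0 : ℝ) r₀,
        ∫⁻ s in Set.Ioc (0 : ℝ) ε, ENNReal.ofReal (s ^ 2)
            ∂(Measure.map (fun s : ℝ => r ^ (-(1 / α)) * s) (ENNReal.ofReal r • ρ)) ≤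
          ENNReal.ofReal ((2 * C / (2 - α)) * ε ^ (2 - α))) ∧
      Tendsto (fun ε : ℝ =>
          Filter.limsup (fun r : ℝ =>
              ∫⁻ s in Set.Ioc (0 : ℝ) ε, ENNReal.ofReal (s ^ 2)
                ∂(Measure.map (fun s : ℝ => r ^ (-(1 / α)) * s) (ENNReal.ofReal r • ρ)))
            (nhdsWithin 0 (Set.Ioi 0)))
        (nhdsWithin 0 (Set.Ioi 0)) (nhds 0) := by
  have htail : ∀ s ∈ Ioc 0 1, ρ (Ioi s) ≤ ENNReal.ofReal (C * s ^ (-α)) := fun s hs =>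
    measure_Ioi_le_ofReal_mul_rpow_neg hs.1
      (measure_Ioi_ne_top_of_lintegral_min_one_sq_lt_top hρlevy hs.1) (hC s hs)
  have hbound : ∀ ε ∈ Ioc (0 : ℝ) 1, ∀ r ∈ Ioc (0 : ℝ) 1,
      ∫⁻ s in Ioc 0 ε, ENNReal.ofReal (s ^ 2) ∂rescaledMeasure ρ α r ≤
        ENNReal.ofReal (2 * C / (2 - α) * ε ^ (2 - α)) := fun ε hε r hr =>
    setLIntegral_Ioc_sq_rescaledMeasure_le ⟨by linarith [hα.1], hα.2⟩ hC0 htail hε hr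
  refine ⟨fun ε hε => ⟨1, one_pos, fun r hr => hbound ε hε r (Ioo_subset_Ioc_self hr)⟩, ?_⟩
  refine tendsto_of_tendsto_of_tendsto_of_le_of_le' tendsto_const_nhds
    (tendsto_ofReal_mul_rpow_nhdsGT_zero (2 * C / (2 - α)) (sub_pos.2 hα.2))
    (Eventually.of_forall fun _ => zero_le) ?_
  filter_upwards [Ioc_mem_nhdsGT one_pos] with ε hε
  refine limsup_le_of_le (by isBoundedDefault) ?_
  filter_upwards [Ioc_mem_nhdsGT one_pos] with r hr using hbound ε hε r hr

/-- Uniform small-jump second-moment bound for the rescaled Lévy measure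
`r ρ(r^{1/α}·)` (pushforward of `rρ` under `s ↦ r^{-1/α}s`), and the resulting
double limit `lim_{ε↓0} limsup_{r↓0} ∫_{0<s≤ε} s² rρ(r^{1/α}ds) = 0`. -/
theorem rescaled_levy_second_moment (ρ : Measure ℝ) (α : ℝ) (hα : α ∈ Set.Ioo (1 : ℝ) 2)
    (hρsupp : ρ (Set.Iic 0) = 0)
    (hρlevy : ∫⁻ s, ENNReal.ofReal (min 1 (s ^ 2)) ∂ρ < ⊤)
    (C : ℝ) (hC0 : 0 ≤ C)
    (hC : ∀ s ∈ Set.Ioc (0 : ℝ) 1, s ^ α * (ρ (Set.Ioi s)).toReal ≤ C) :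
    (∀ ε ∈ Set.Ioc (0 : ℝ) 1, ∃ r₀ > (0 : ℝ), ∀ r ∈ Set.Ioo (0 : ℝ) r₀,
        ∫⁻ s in Set.Ioc (0 : ℝ) ε, ENNReal.ofReal (s ^ 2)
            ∂(Measure.map (fun s : ℝ => r ^ (-(1 / α)) * s) (ENNReal.ofReal r • ρ)) ≤
          ENNReal.ofReal ((2 * C / (2 - α)) * ε ^ (2 - α))) ∧
      Tendsto (fun ε : ℝ =>
          Filter.limsup (fun r : ℝ =>
              ∫⁻ s in Set.Ioc (0 : ℝ) ε, ENNReal.ofReal (s ^ 2)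
                ∂(Measure.map (fun s : ℝ => r ^ (-(1 / α)) * s) (ENNReal.ofReal r • ρ)))
            (nhdsWithin 0 (Set.Ioi 0)))
        (nhdsWithin 0 (Set.Ioi 0)) (nhds 0) :=
  rescaled_levy_second_moment_general ρ α hα hρlevy C hC0 hC
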